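/- For every integer n ≥ 0 and every real number q > 1, the sum over all double partitions (ν,κ) of n of N(n,q,ν,κ) = |Sp_{2n}(F_q)| / (v_ν v_κ ∏_{r≥1} (q^r-1)^{n_r(ν)} (q^r+1)^{n_r(κ)}) equals q^{2n²}. (For q a prime power this recovers Steinberg's theorem that the total number of F-stable maximal tori of Sp_{2n}(\bar F_q) is q^{2n²}.) -/

import Mathlib

/-!
Write the summand as `|Sp_{2n}(q)| · w₋(ν) · w₊(κ)` with
`w_±(μ) = ∏_r (n_r! · (2r(q^r ± 1))^{n_r})⁻¹`. Summing `w_±` over the partitions of `m` gives the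
coefficients of `exp (∑_r x^r / (2r(q^r ± 1)))`, so the double sum is the `n`-th coefficient of
`exp (∑_r x^r q^r / (r(q^{2r} - 1)))`, which is Euler's product
`∏_{k ≥ 0} (1 - x q^{-2k-1})⁻¹ = ∑_n q^{-n} x^n / (q^{-2}; q^{-2})_n`.
Instead of exponentials and infinite products we compare logarithmic derivatives: a power series
`F` with `F(0) = 1` and `x F' = C F` is determined by `C`. The partition side satisfies such an
equation by removing one part from a partition, the `q`-side by a telescoping identity for
`q`-Pochhammer symbols. Finally `|Sp_{2n}(q)| · q^{-n} / (q^{-2}; q^{-2})_n = q^{2n²}`.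
-/

open Finset

/-- `v_μ = ∏_{r≥1} n_r(μ)! · (2r)^{n_r(μ)}`. -/
def vOf (mu : Multiset ℕ) : ℕ :=
  ∏ r ∈ mu.toFinset, Nat.factorial (mu.count r) * (2 * r) ^ (mu.count r)

/-- `|Sp_{2n}(F_q)| = q^{n²} ∏_{i=1}^n (q^{2i} - 1)`, for a real parameter `q`. -/
noncomputable def Spcard (q : ℝ) (n : ℕ) : ℝ :=
  q ^ (n ^ 2) * ∏ i ∈ Finset.Icc 1 n, (q ^ (2 * i) - 1)

/-- `N(n,q,ν,κ) = |Sp_{2n}(F_q)| / (v_ν v_κ ∏_{r≥1} (q^r-1)^{n_r(ν)} (q^r+1)^{n_r(κ)})`. -/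
noncomputable def NBC (q : ℝ) (n : ℕ) {a b : ℕ} (nu : Nat.Partition a)
    (ka : Nat.Partition b) : ℝ :=
  Spcard q n /
    ((vOf nu.parts : ℝ) * (vOf ka.parts : ℝ) *
      (∏ r ∈ nu.parts.toFinset, (q ^ r - 1) ^ (nu.parts.count r)) *
      (∏ r ∈ ka.parts.toFinset, (q ^ r + 1) ^ (ka.parts.count r)))

open PowerSeries
open scoped Nat

namespace PowerSeries

variable {K : Type*} [Field K]

theorem coeff_X_mul_derivative (F : K⟦X⟧) (n : ℕ) :
    coeff n (X * d⁄dX K F) = n * coeff n F := by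
  cases n with
  | zero => simp
  | succ n => rw [coeff_succ_X_mul, coeff_derivative, mul_comm]; push_cast; rfl

theorem coeff_mul_eq_sum_Icc {C : K⟦X⟧} (hC : constantCoeff C = 0) (F : K⟦X⟧) (n : ℕ) :
    coeff n (C * F) = ∑ r ∈ Icc 1 n, coeff r C * coeff (n - r) F := by
  rw [coeff_mul, Nat.sum_antidiagonal_eq_sum_range_succ_mk, range_eq_Ico,
    sum_eq_sum_Ico_succ_bot n.succ_pos]
  simp [hC, ← Ico_add_one_right_eq_Icc]

theorem X_mul_derivative_mul {F G C D : K⟦X⟧} (hF : X * d⁄dX K F = C * F)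
    (hG : X * d⁄dX K G = D * G) : X * d⁄dX K (F * G) = (C + D) * (F * G) := by
  rw [Derivation.leibniz, smul_eq_mul, smul_eq_mul]
  linear_combination F * hG + G * hF

theorem eq_of_X_mul_derivative_eq_mul [CharZero K] {F G C : K⟦X⟧} (hC : constantCoeff C = 0)
    (hF : X * d⁄dX K F = C * F) (hG : X * d⁄dX K G = C * G)
    (h0 : constantCoeff F = constantCoeff G) : F = G := by
  rw [← sub_eq_zero]
  have hE : X * d⁄dX K (F - G) = C * (F - G) := by rw [map_sub]; linear_combination hF - hG
  ext n
  induction n using Nat.strong_induction_on with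
  | _ n ih =>
    rcases n.eq_zero_or_pos with rfl | hn
    · simpa [sub_eq_zero] using h0
    have key := congrArg (coeff n) hE
    rw [coeff_X_mul_derivative, coeff_mul_eq_sum_Icc hC,
      sum_eq_zero fun r hr => by rw [ih (n - r) (by grind), map_zero, mul_zero]] at key
    simpa [hn.ne'] using key

end PowerSeries

theorem Nat.Partition.sum_sum_erase {M : Type*} [AddCommMonoid M] (G : ℕ → Multiset ℕ → M)
    (m : ℕ) :
    ∑ p : m.Partition, ∑ r ∈ p.parts.toFinset, G r (p.parts.erase r)
      = ∑ r ∈ Icc 1 m, ∑ q : (m - r).Partition, G r q.parts := by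
  calc ∑ p : m.Partition, ∑ r ∈ p.parts.toFinset, G r (p.parts.erase r)
      = ∑ p : m.Partition, ∑ r ∈ Icc 1 m, if r ∈ p.parts then G r (p.parts.erase r) else 0 := by
        refine sum_congr rfl fun p _ => ?_
        rw [← sum_filter]
        congr 1
        ext r
        simpa using fun hr => ⟨p.parts_pos hr, p.le_of_mem_parts hr⟩
    _ = ∑ r ∈ Icc 1 m, ∑ p : m.Partition, if r ∈ p.parts then G r (p.parts.erase r) else 0 :=
        sum_comm
    _ = _ := by
        refine sum_congr rfl fun r hr => ?_
        obtain ⟨hr1, hrm⟩ := mem_Icc.mp hr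
        rw [← sum_filter, sum_subtype (p := fun p : m.Partition => r ∈ p.parts) _ (by simp)]
        exact Fintype.sum_equiv (Partition.partitionWithPartEquiv hr1 hrm) _ _ fun _ => rfl

section ExpGenFun

variable {K : Type*} [Field K]

theorem Multiset.count_cons_mul_prod_toFinsupp [CharZero K] (w : ℕ → K) (a : ℕ)
    (s : Multiset ℕ) :
    ((a ::ₘ s).count a : K) * (a ::ₘ s).toFinsupp.prod (fun i c => w i ^ c / c !)
      = w a * s.toFinsupp.prod (fun i c => w i ^ c / c !) := by
  set T := (a ::ₘ s).toFinset
  have haT : a ∈ T := by simp [T]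
  have hsT : s.toFinsupp.support ⊆ T := by intro i; simp [T]; tauto
  rw [Finsupp.prod_of_support_subset _ hsT _ (by simp), Finsupp.prod, Multiset.toFinsupp_support,
    ← mul_prod_erase T _ haT, ← mul_prod_erase T _ haT]
  simp only [Multiset.toFinsupp_apply, Multiset.count_cons_self]
  rw [prod_congr rfl fun i hi => by rw [Multiset.count_cons_of_ne (ne_of_mem_erase hi)]]
  rw [Nat.factorial_succ]
  push_cast
  field_simp
  ring

theorem Multiset.sum_mul_prod_toFinsupp [CharZero K] (w : ℕ → K) (s : Multiset ℕ) :
    (s.sum : K) * s.toFinsupp.prod (fun i c => w i ^ c / c !)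
      = ∑ r ∈ s.toFinset, r * w r * (s.erase r).toFinsupp.prod (fun i c => w i ^ c / c !) := by
  rw [sum_multiset_count, Nat.cast_sum, sum_mul]
  refine sum_congr rfl fun r hr => ?_
  have h := count_cons_mul_prod_toFinsupp w r (s.erase r)
  rw [cons_erase (mem_toFinset.mp hr)] at h
  rw [smul_eq_mul, Nat.cast_mul]
  linear_combination (r : K) * h

/-- The series `exp (∑ w i Xⁱ)`, expanded as a sum over partitions. -/
noncomputable def expGenFun (w : ℕ → K) : K⟦X⟧ :=
  Nat.Partition.genFun fun i c => w i ^ c / c !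

theorem constantCoeff_expGenFun (w : ℕ → K) : constantCoeff (expGenFun w) = 1 := by
  rw [← coeff_zero_eq_constantCoeff_apply, expGenFun, Nat.Partition.coeff_genFun]
  simp

theorem X_mul_derivative_expGenFun [CharZero K] (w : ℕ → K) :
    X * d⁄dX K (expGenFun w) = (PowerSeries.mk fun r => r * w r) * expGenFun w := by
  ext m
  rw [coeff_X_mul_derivative, coeff_mul_eq_sum_Icc (by simp)]
  simp only [expGenFun, Nat.Partition.coeff_genFun, coeff_mk, mul_sum]
  calc ∑ p : m.Partition, (m : K) * p.parts.toFinsupp.prod (fun i c => w i ^ c / c !)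
      = ∑ p : m.Partition, ∑ r ∈ p.parts.toFinset,
          r * w r * (p.parts.erase r).toFinsupp.prod (fun i c => w i ^ c / c !) := by
        refine sum_congr rfl fun p _ => ?_
        rw [← Multiset.sum_mul_prod_toFinsupp, p.parts_sum]
    _ = _ := Nat.Partition.sum_sum_erase (fun r s => r * w r * s.toFinsupp.prod _) m

end ExpGenFun

section QExp

variable {K : Type*} [Field K]

/-- The `q`-Pochhammer symbol `(s; s)_n`. -/
def qPochhammer (s : K) (n : ℕ) : K := ∏ i ∈ range n, (1 - s ^ (i + 1))

theorem qPochhammer_succ (s : K) (n : ℕ) :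
    qPochhammer s (n + 1) = qPochhammer s n * (1 - s ^ (n + 1)) :=
  prod_range_succ _ _

/-- Euler's series `∑ uⁿ / (s; s)_n = ∏_{k ≥ 0} (1 - u sᵏ)⁻¹`. -/
noncomputable def qExpSeries (s u : K) : K⟦X⟧ :=
  PowerSeries.mk fun n => u ^ n * (qPochhammer s n)⁻¹

theorem qPochhammer_ne_zero {s : K} (hs : ∀ i, s ^ (i + 1) ≠ 1) (n : ℕ) :
    qPochhammer s n ≠ 0 :=
  prod_ne_zero_iff.mpr fun i _ => sub_ne_zero.mpr (hs i).symm

theorem sum_antidiagonal_inv_one_sub_pow_mul_inv_qPochhammer {s : K}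
    (hs : ∀ i, s ^ (i + 1) ≠ 1) (n : ℕ) :
    ∑ p ∈ antidiagonal n, (1 - s ^ p.1)⁻¹ * (qPochhammer s p.2)⁻¹
      = n * (qPochhammer s n)⁻¹ := by
  set l : ℕ → K := fun r => (1 - s ^ r)⁻¹
  set b : ℕ → K := fun k => (qPochhammer s k)⁻¹
  have hl (r : ℕ) : (1 - s ^ (r + 1)) * l (r + 1) = 1 :=
    mul_inv_cancel₀ (sub_ne_zero.mpr (hs r).symm)
  have hb (k : ℕ) : (1 - s ^ (k + 1)) * b (k + 1) = b k := by
    simp only [b, qPochhammer_succ, mul_inv]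
    rw [mul_left_comm, mul_inv_cancel₀ (sub_ne_zero.mpr (hs k).symm), mul_one]
  show ∑ p ∈ antidiagonal n, l p.1 * b p.2 = n * b n
  induction n with
  | zero => simp [l]
  | succ n ih =>
    have hl0 : ∀ p ∈ antidiagonal n, b p.2 + s ^ p.1 * l p.1 * b p.2
        = l p.1 * b p.2 + if p.1 = 0 then b p.2 else 0 := by
      rintro ⟨_ | r, k⟩ -
      · simp [l]
      · rw [if_neg r.succ_ne_zero]
        linear_combination (-b k) * hl r
    apply mul_left_cancel₀ (sub_ne_zero.mpr (hs n).symm)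
    calc (1 - s ^ (n + 1)) * ∑ p ∈ antidiagonal (n + 1), l p.1 * b p.2
        = ∑ p ∈ antidiagonal (n + 1), (1 - s ^ p.1) * l p.1 * b p.2
          + ∑ p ∈ antidiagonal (n + 1), s ^ p.1 * l p.1 * ((1 - s ^ p.2) * b p.2) := by
          rw [mul_sum, ← sum_add_distrib]
          refine sum_congr rfl fun p hp => ?_
          rw [← mem_antidiagonal.mp hp, pow_add]
          ring
      _ = ∑ p ∈ antidiagonal n, (b p.2 + s ^ p.1 * l p.1 * b p.2) := by
          rw [Nat.sum_antidiagonal_succ, Nat.sum_antidiagonal_succ', sum_add_distrib]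
          simp only [pow_zero, sub_self, zero_mul, mul_zero, zero_add, hl, hb, one_mul]
      _ = n * b n + b n := by
          rw [sum_congr rfl hl0, sum_add_distrib, ih, Nat.sum_antidiagonal_eq_sum_range_succ_mk]
          simp
      _ = (1 - s ^ (n + 1)) * ((n + 1 : ℕ) * b (n + 1)) := by
          push_cast
          linear_combination (-(n + 1 : K)) * hb n

-- The coefficient of `X ^ 0` on the right is `(1 - 1)⁻¹ = 0`.
theorem X_mul_derivative_qExpSeries {s : K} (hs : ∀ i, s ^ (i + 1) ≠ 1) (u : K) :
    X * d⁄dX K (qExpSeries s u)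
      = (PowerSeries.mk fun r => u ^ r * (1 - s ^ r)⁻¹) * qExpSeries s u := by
  ext n
  rw [coeff_X_mul_derivative, coeff_mul]
  simp only [qExpSeries, coeff_mk]
  rw [mul_left_comm, ← sum_antidiagonal_inv_one_sub_pow_mul_inv_qPochhammer hs, mul_sum]
  refine sum_congr rfl fun p hp => ?_
  rw [← mem_antidiagonal.mp hp, pow_add]
  ring

end QExp

theorem prod_Icc_pow_two_mul_sub_one {K : Type*} [Field K] {q : K} (hq : q ≠ 0) (n : ℕ) :
    ∏ i ∈ Icc 1 n, (q ^ (2 * i) - 1) = q ^ (n * (n + 1)) * qPochhammer (q⁻¹ ^ 2) n := by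
  induction n with
  | zero => simp [qPochhammer]
  | succ n ih =>
    have h : q ^ (2 * (n + 1)) - 1 = q ^ (2 * (n + 1)) * (1 - (q⁻¹ ^ 2) ^ (n + 1)) := by
      rw [← pow_mul, inv_pow, mul_sub, mul_inv_cancel₀ (pow_ne_zero _ hq), mul_one]
    rw [prod_Icc_succ_top (by omega), ih, qPochhammer_succ, h,
      show (n + 1) * (n + 1 + 1) = n * (n + 1) + 2 * (n + 1) by ring, pow_add]
    ring

theorem Spcard_mul_inv_pow {q : ℝ} (hq : q ≠ 0) (n : ℕ) :
    Spcard q n * q⁻¹ ^ n = q ^ (2 * n ^ 2) * qPochhammer (q⁻¹ ^ 2) n := by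
  have h : q ^ n * q⁻¹ ^ n = 1 := by rw [← mul_pow, mul_inv_cancel₀ hq, one_pow]
  rw [Spcard, prod_Icc_pow_two_mul_sub_one hq, show n * (n + 1) = n ^ 2 + n by ring,
    show 2 * n ^ 2 = n ^ 2 + n ^ 2 by ring, pow_add, pow_add]
  linear_combination q ^ n ^ 2 * q ^ n ^ 2 * qPochhammer (q⁻¹ ^ 2) n * h

theorem prod_toFinsupp_inv_two_mul_pow {K : Type*} [Field K] (d : ℕ → K) (μ : Multiset ℕ) :
    μ.toFinsupp.prod (fun i c => (2 * i * d i)⁻¹ ^ c / c !)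
      = ((vOf μ : K) * ∏ r ∈ μ.toFinset, d r ^ μ.count r)⁻¹ := by
  rw [Finsupp.prod, vOf]
  push_cast
  rw [← prod_mul_distrib, ← prod_inv_distrib]
  refine prod_congr rfl fun r _ => ?_
  rw [Multiset.toFinsupp_apply, inv_pow, div_eq_mul_inv, ← mul_inv]
  ring

theorem NBC_eq_mul (q : ℝ) (n : ℕ) {a b : ℕ} (nu : Nat.Partition a) (ka : Nat.Partition b) :
    NBC q n nu ka = Spcard q n *
      (nu.parts.toFinsupp.prod (fun i c => (2 * i * (q ^ i - 1))⁻¹ ^ c / c !) *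
        ka.parts.toFinsupp.prod (fun i c => (2 * i * (q ^ i + 1))⁻¹ ^ c / c !)) := by
  rw [NBC, prod_toFinsupp_inv_two_mul_pow, prod_toFinsupp_inv_two_mul_pow, div_eq_mul_inv,
    ← mul_inv]
  ring_nf

theorem inv_sq_pow_succ_ne_one {q : ℝ} (hq : 1 < q) (i : ℕ) : (q⁻¹ ^ 2) ^ (i + 1) ≠ 1 :=
  (pow_lt_one₀ (by positivity) (pow_lt_one₀ (by positivity) (inv_lt_one_of_one_lt₀ hq)
    two_ne_zero) i.succ_ne_zero).ne

theorem expGenFun_mul_expGenFun_eq_qExpSeries {q : ℝ} (hq : 1 < q) :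
    expGenFun (fun i => (2 * i * (q ^ i - 1))⁻¹) * expGenFun (fun i => (2 * i * (q ^ i + 1))⁻¹)
      = qExpSeries (q⁻¹ ^ 2) q⁻¹ := by
  have hC : (PowerSeries.mk fun r : ℕ => (r : ℝ) * (2 * r * (q ^ r - 1))⁻¹)
      + (PowerSeries.mk fun r : ℕ => (r : ℝ) * (2 * r * (q ^ r + 1))⁻¹)
      = PowerSeries.mk fun r => q⁻¹ ^ r * (1 - (q⁻¹ ^ 2) ^ r)⁻¹ := by
    ext r
    simp only [map_add, coeff_mk]
    rcases r.eq_zero_or_pos with rfl | hr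
    · simp
    have hx : 1 < q ^ r := one_lt_pow₀ hq hr.ne'
    rw [← pow_mul, inv_pow, inv_pow, pow_mul']
    generalize q ^ r = x at hx
    have h0 : (r : ℝ) ≠ 0 := Nat.cast_ne_zero.mpr hr.ne'
    have h1 : x - 1 ≠ 0 := (sub_pos.mpr hx).ne'
    have h2 : x + 1 ≠ 0 := by positivity
    have h3 : x ^ 2 - 1 ≠ 0 := by nlinarith
    field_simp
    ring
  refine eq_of_X_mul_derivative_eq_mul (by simp) ?_
    (X_mul_derivative_qExpSeries (inv_sq_pow_succ_ne_one hq) q⁻¹) ?_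
  · rw [← hC]
    exact X_mul_derivative_mul (X_mul_derivative_expGenFun _) (X_mul_derivative_expGenFun _)
  · simp [constantCoeff_expGenFun, qExpSeries, qPochhammer]

/-- **Corollary 3.4 (Steinberg's count)**: the sum of `N(n,q,ν,κ)` over all double
partitions `(ν,κ)` of `n` equals `q^{2n²}`.  The sum over double partitions of `n` is
realized as a sum over `k ≤ n`, `ν` a partition of `k` and `κ` a partition of `n - k`. -/
theorem count_tori_typeBC (n : ℕ) (q : ℝ) (hq : 1 < q) :
    (∑ k ∈ Finset.range (n + 1), ∑ nu : Nat.Partition k, ∑ ka : Nat.Partition (n - k),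
        NBC q n nu ka) = q ^ (2 * n ^ 2) := by
  calc _ = Spcard q n * coeff n (expGenFun (fun i => (2 * i * (q ^ i - 1))⁻¹)
        * expGenFun (fun i => (2 * i * (q ^ i + 1))⁻¹)) := by
        simp only [NBC_eq_mul, ← mul_sum, ← sum_mul, coeff_mul,
          Nat.sum_antidiagonal_eq_sum_range_succ_mk, expGenFun, Nat.Partition.coeff_genFun]
    _ = Spcard q n * q⁻¹ ^ n * (qPochhammer (q⁻¹ ^ 2) n)⁻¹ := by
        rw [expGenFun_mul_expGenFun_eq_qExpSeries hq, qExpSeries, coeff_mk, mul_assoc]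
    _ = q ^ (2 * n ^ 2) := by
        rw [Spcard_mul_inv_pow (by positivity), mul_assoc,
          mul_inv_cancel₀ (qPochhammer_ne_zero (inv_sq_pow_succ_ne_one hq) n), mul_one]
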